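/- Let $A$ be a left-symmetric conformal algebra and $\omega^1, \omega^2: A\times A \to A^{*c}$ two invariant 2-cocycles. The $T^*$-extensions $T^*_{\omega^1}A$ and $T^*_{\omega^2}A$ are equivalent if and only if there exists $\theta \in \mathrm{CHom}(A, A^{*c})$ such that $\omega^1_\lambda(a,b) - \omega^2_\lambda(a,b) = (L^*_A(a))_\lambda\theta(b) - \theta(a_\lambda b)$ for all $a, b \in A$. In this case, $\beta_\lambda(a,b) := \frac{1}{2}(\theta(a)_\lambda b + \theta(b)_{-\lambda} a)$ is a symmetric invariant bilinear form on $A$, and the extensions are isometrically equivalent if and only if additionally $\beta = 0$. -/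

import Mathlib

/-! An equivalence `Φ` of `T^*`-extensions is additive, fixes `A^{*c}` and induces the
identity on `A`, so `Φ (a + f) = a + (f + θ a)` with `θ a` the `A^{*c}`-component of `Φ a`.
Such a shear commutes with `∂` and is multiplicative exactly when `θ` is a `ℂ[∂]`-module
map with `ω¹ - ω² = dθ`, and it changes the form by `B_λ(Φ x, Φ y) = B_λ(x, y) + 2 β_λ(a, b)`.
-/

/- Encoding conventions.
A `ℂ[∂]`-module is encoded as a complex vector space `A` together with an
endomorphism `D : Module.End ℂ A` (the action of `∂`).
A polynomial `Σ cₙ λⁿ ∈ A[λ]` is encoded by its coefficient family `ℕ →₀ A`,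
and `ev l p` is its evaluation at `λ = l`.  Since `ℂ` is infinite, a polynomial
identity in the formal variables `λ, μ, …` is equivalent to the corresponding
family of identities for all complex values of the variables, which is how all
axioms are stated below.
A `λ`-product `a ⊗ b ↦ a_λ b ∈ A[λ]` is encoded as `mul : A → A → (ℕ →₀ A)`
(the coefficients of `a_λ b`), its evaluation at `λ = l` being `ev l (mul a b)`.
`substNeg D p` is the result of substituting the variable of `p` by `-∂-λ`:
it is again a polynomial in `λ` with coefficients `ℕ →₀ A`, so that
`b_{-∂-λ} a` is encoded as `substNeg D (mul b a)` (as a polynomial in `λ`). -/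

namespace LSCpaper

open Finsupp

variable {A M V : Type*} [AddCommGroup A] [Module ℂ A] [AddCommGroup M] [Module ℂ M]
  [AddCommGroup V] [Module ℂ V]

/-- Evaluation of a polynomial with coefficients in `V` at a complex number. -/
noncomputable def ev (l : ℂ) (p : ℕ →₀ V) : V := p.sum fun n c => l ^ n • c

/-- Substitution of `-∂ - λ` for the variable of `p`; the result is the
coefficient family (in `λ`) of the resulting polynomial. -/
noncomputable def substNeg (D : Module.End ℂ A) (p : ℕ →₀ A) : ℕ →₀ A :=
  p.sum fun i c => ∑ k ∈ Finset.range (i + 1),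
    Finsupp.single k ((((-1 : ℂ) ^ k * (i.choose k : ℂ))) • ((-D) ^ (i - k)) c)

/-- `ℂ`-bilinearity of a `λ`-product. -/
def Bilin (f : A → M → ℕ →₀ V) : Prop :=
  (∀ a a' b, f (a + a') b = f a b + f a' b) ∧
  (∀ (r : ℂ) (a : A) (b : M), f (r • a) b = r • f a b) ∧
  (∀ a b b', f a (b + b') = f a b + f a b') ∧
  (∀ (r : ℂ) (a : A) (b : M), f a (r • b) = r • f a b)

/-- `A` with `∂`-action `D` and `λ`-product `mul` is a left-symmetric conformal
algebra. -/
structure IsLSC (D : Module.End ℂ A) (mul : A → A → ℕ →₀ A) : Prop where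
  bilin : Bilin mul
  sesq1 : ∀ (l : ℂ) (a b : A), ev l (mul (D a) b) = (-l) • ev l (mul a b)
  sesq2 : ∀ (l : ℂ) (a b : A), ev l (mul a (D b)) = D (ev l (mul a b)) + l • ev l (mul a b)
  lsym : ∀ (l m : ℂ) (a b c : A),
    ev (l + m) (mul (ev l (mul a b)) c) - ev l (mul a (ev m (mul b c))) =
      ev (l + m) (mul (ev m (mul b a)) c) - ev m (mul b (ev l (mul a c)))

/-- `A` with `∂`-action `D` and `λ`-bracket `br` is a Lie conformal algebra. -/
structure IsLieConf (D : Module.End ℂ A) (br : A → A → ℕ →₀ A) : Prop where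
  bilin : Bilin br
  sesq1 : ∀ (l : ℂ) (a b : A), ev l (br (D a) b) = (-l) • ev l (br a b)
  sesq2 : ∀ (l : ℂ) (a b : A), ev l (br a (D b)) = D (ev l (br a b)) + l • ev l (br a b)
  skew : ∀ (l : ℂ) (a b : A), ev l (br a b) = - ev l (substNeg D (br b a))
  jacobi : ∀ (l m : ℂ) (a b c : A),
    ev l (br a (ev m (br b c))) =
      ev (l + m) (br (ev l (br a b)) c) + ev m (br b (ev l (br a c)))

/-- The evaluated bracket `[a_λ b] = a_λ b - b_{-∂-λ} a` of the sub-adjacent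
Lie conformal algebra. -/
noncomputable def brEv (D : Module.End ℂ A) (mul : A → A → ℕ →₀ A) (l : ℂ) (a b : A) : A :=
  ev l (mul a b) - ev l (substNeg D (mul b a))

end LSCpaper

namespace LSCpaper

variable {A : Type*} [AddCommGroup A] [Module ℂ A]

/-- Substitution of `λ - s` for the variable of a polynomial `p`. -/
noncomputable def substShift {V : Type*} [AddCommGroup V] [Module ℂ V]
    (s : ℂ) (p : ℕ →₀ V) : ℕ →₀ V :=
  p.sum fun j c => ∑ k ∈ Finset.range (j + 1),
    Finsupp.single k (((j.choose k : ℂ) * (-s) ^ (j - k)) • c)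

/-- Elements of the conformal dual `A^{*c}` are encoded as maps
`A → ℂ[λ]`; `IsDual` is the conformal-linearity condition
(`ℂ` carries the trivial `∂`-action, so `f_λ(∂ a) = λ f_λ(a)`). -/
def IsDual (D : Module.End ℂ A) (f : A → ℕ →₀ ℂ) : Prop :=
  (∀ a a', f (a + a') = f a + f a') ∧
  (∀ (r : ℂ) (a : A), f (r • a) = r • f a) ∧
  (∀ (l : ℂ) (a : A), ev l (f (D a)) = l • ev l (f a))

/-- The action of `∂` on the conformal dual: `(∂ f)_λ = -λ f_λ`. -/
noncomputable def Dd (f : A → ℕ →₀ ℂ) : A → ℕ →₀ ℂ :=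
  fun a => - Finsupp.mapDomain (· + 1) (f a)

/-- The evaluated action `L^*`:
`Lstar mul l a g = (L^*_A(a))_λ g` at `λ = l`, determined by
`((L^*_A(a))_λ g)_{λ+μ}(b) = - g_μ(a_λ b)`; the result is recorded through its
coefficient family in the total subscript `ν = λ + μ`. -/
noncomputable def Lstar (mul : A → A → ℕ →₀ A) (l : ℂ) (a : A)
    (g : A → ℕ →₀ ℂ) : A → ℕ →₀ ℂ :=
  fun b => - substShift l (g (ev l (mul a b)))

/-- `ω` is a `2`-cocycle of `A` with coefficients in the module
`A^{*c}_L = (A^{*c}, L^*_A, 0)` (in evaluated form, `ω l a b = ω_λ(a,b)` at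
`λ = l`). -/
def IsCocycleDual (D : Module.End ℂ A) (mul : A → A → ℕ →₀ A)
    (ω : ℂ → A → A → (A → ℕ →₀ ℂ)) : Prop :=
  ∀ (l m : ℂ) (a b c : A),
    ω (l + m) (ev l (mul a b)) c - ω l a (ev m (mul b c)) - Lstar mul l a (ω m b c) =
      ω (l + m) (ev m (mul b a)) c - ω m b (ev l (mul a c)) - Lstar mul m b (ω l a c)

/-- `ω` is conformal bilinear with values in the conformal dual. -/
def IsC2Dual (D : Module.End ℂ A) (ω : ℂ → A → A → (A → ℕ →₀ ℂ)) : Prop :=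
  (∀ l a a' b, ω l (a + a') b = ω l a b + ω l a' b) ∧
  (∀ (l r : ℂ) a b, ω l (r • a) b = r • ω l a b) ∧
  (∀ l a b b', ω l a (b + b') = ω l a b + ω l a b') ∧
  (∀ (l r : ℂ) a b, ω l a (r • b) = r • ω l a b) ∧
  (∀ (l : ℂ) a b, ω l (D a) b = (-l) • ω l a b) ∧
  (∀ (l : ℂ) a b, ω l a (D b) = Dd (ω l a b) + l • ω l a b) ∧
  (∀ (l : ℂ) a b, IsDual D (ω l a b))

/-- A left-symmetric conformal algebra structure, given directly by the
evaluations `p l x y = x ·_λ y` at `λ = l` of the `λ`-product, with `∂`-action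
`DX`. -/
structure IsLSCEv {X : Type*} [AddCommGroup X] [Module ℂ X]
    (DX : X → X) (p : ℂ → X → X → X) : Prop where
  addl : ∀ (l : ℂ) x x' y, p l (x + x') y = p l x y + p l x' y
  smull : ∀ (l r : ℂ) x y, p l (r • x) y = r • p l x y
  addr : ∀ (l : ℂ) x y y', p l x (y + y') = p l x y + p l x y'
  smulr : ∀ (l r : ℂ) x y, p l x (r • y) = r • p l x y
  sesq1 : ∀ (l : ℂ) x y, p l (DX x) y = (-l) • p l x y
  sesq2 : ∀ (l : ℂ) x y, p l x (DX y) = DX (p l x y) + l • p l x y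
  lsym : ∀ (l m : ℂ) x y z,
    p (l + m) (p l x y) z - p l x (p m y z) = p (l + m) (p m y x) z - p m y (p l x z)

/-- The `∂`-action on `A ⊕ A^{*c}`. -/
noncomputable def DX (D : Module.End ℂ A) : A × (A → ℕ →₀ ℂ) → A × (A → ℕ →₀ ℂ) :=
  fun x => (D x.1, Dd x.2)

/-- The (evaluated) product `(a+f) ·^ω_λ (b+g) = a_λ b + ω_λ(a,b) + (L^*_A(a))_λ g`
on `A ⊕ A^{*c}`. -/
noncomputable def pExt (mul : A → A → ℕ →₀ A) (ω : ℂ → A → A → (A → ℕ →₀ ℂ)) :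
    ℂ → A × (A → ℕ →₀ ℂ) → A × (A → ℕ →₀ ℂ) → A × (A → ℕ →₀ ℂ) :=
  fun l x y => (ev l (mul x.1 y.1), ω l x.1 y.1 + Lstar mul l x.1 y.2)

/-- The (evaluated) symmetric bilinear form
`B_λ(a+f, b+g) = f_λ(b) + g_{-λ}(a)` on `A ⊕ A^{*c}`. -/
noncomputable def Bev : ℂ → A × (A → ℕ →₀ ℂ) → A × (A → ℕ →₀ ℂ) → ℂ :=
  fun l x y => ev l (x.2 y.1) + ev (-l) (y.2 x.1)

/-- Invariance of `ω` :
`ω_λ(a,b)_{λ+μ} c - ω_μ(b,c)_{-λ} a = ω_μ(b,a)_{λ+μ} c - ω_λ(a,c)_{-μ} b`. -/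
def IsInvariantDual (ω : ℂ → A → A → (A → ℕ →₀ ℂ)) : Prop :=
  ∀ (l m : ℂ) (a b c : A),
    ev (l + m) ((ω l a b) c) - ev (-l) ((ω m b c) a) =
      ev (l + m) ((ω m b a) c) - ev (-m) ((ω l a c) b)

end LSCpaper

namespace LSCpaper

variable {A : Type*} [AddCommGroup A] [Module ℂ A]

/-- `Φ` is an equivalence of the `T^*`-extensions `T^*_{ω¹} A` and
`T^*_{ω²} A`: an isomorphism of left-symmetric conformal algebras which is
the identity on the ideal `A^{*c}` and induces the identity on the factor
algebra `A`. -/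
structure IsExtEquiv (D : Module.End ℂ A) (mul : A → A → ℕ →₀ A)
    (ω₁ ω₂ : ℂ → A → A → (A → ℕ →₀ ℂ))
    (Φ : A × (A → ℕ →₀ ℂ) → A × (A → ℕ →₀ ℂ)) : Prop where
  add : ∀ x y, Φ (x + y) = Φ x + Φ y
  smul : ∀ (r : ℂ) x, Φ (r • x) = r • Φ x
  dcomm : ∀ x, Φ (DX D x) = DX D (Φ x)
  bij : Function.Bijective Φ
  hom : ∀ (l : ℂ) x y, Φ (pExt mul ω₁ l x y) = pExt mul ω₂ l (Φ x) (Φ y)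
  idOnDual : ∀ f : A → ℕ →₀ ℂ, Φ (0, f) = (0, f)
  idOnQuot : ∀ x, (Φ x).1 = x.1

/-- The conditions on `θ : A → A^{*c}` appearing in the classification of
equivalences of `T^*`-extensions: a `ℂ[∂]`-module homomorphism. -/
def IsTheta (D : Module.End ℂ A) (θ : A → (A → ℕ →₀ ℂ)) : Prop :=
  (∀ a a', θ (a + a') = θ a + θ a') ∧
  (∀ (r : ℂ) a, θ (r • a) = r • θ a) ∧
  (∀ a, θ (D a) = Dd (θ a))

/-- The evaluated bilinear form `β_λ(a,b) = ½ (θ(a)_λ b + θ(b)_{-λ} a)`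
induced by `θ`. -/
noncomputable def betaEv (θ : A → (A → ℕ →₀ ℂ)) (l : ℂ) (a b : A) : ℂ :=
  (2⁻¹ : ℂ) * (ev l ((θ a) b) + ev (-l) ((θ b) a))

section Evaluation

variable {V : Type*} [AddCommGroup V] [Module ℂ V]

lemma ev_eq_lsum (l : ℂ) (p : ℕ →₀ V) :
    ev l p = Finsupp.lsum ℂ (fun n => l ^ n • (LinearMap.id : V →ₗ[ℂ] V)) p := rfl

lemma ev_add (l : ℂ) (p q : ℕ →₀ V) : ev l (p + q) = ev l p + ev l q := by
  simp only [ev_eq_lsum, map_add]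

lemma ev_zero (l : ℂ) : ev l (0 : ℕ →₀ V) = 0 := by
  simp only [ev_eq_lsum, map_zero]

lemma ev_neg (l : ℂ) (p : ℕ →₀ V) : ev l (-p) = -ev l p := by
  simp only [ev_eq_lsum, map_neg]

lemma ev_sub (l : ℂ) (p q : ℕ →₀ V) : ev l (p - q) = ev l p - ev l q := by
  simp only [ev_eq_lsum, map_sub]

lemma ev_single (l : ℂ) (n : ℕ) (v : V) : ev l (Finsupp.single n v) = l ^ n • v :=
  Finsupp.sum_single_index (smul_zero _)

lemma substShift_zero (s : ℂ) : substShift s (0 : ℕ →₀ V) = 0 :=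
  Finsupp.sum_zero_index

lemma substShift_add (s : ℂ) (p q : ℕ →₀ V) :
    substShift s (p + q) = substShift s p + substShift s q :=
  Finsupp.sum_add_index' (fun _ => by simp)
    (fun _ _ _ => by simp only [smul_add, Finsupp.single_add, Finset.sum_add_distrib])

lemma ev_substShift (ν s : ℂ) (p : ℕ →₀ V) : ev ν (substShift s p) = ev (ν - s) p := by
  have binom : ∀ j : ℕ,
      ∑ k ∈ Finset.range (j + 1), ν ^ k * ((j.choose k : ℂ) * (-s) ^ (j - k)) = (ν - s) ^ j := by
    intro j
    rw [sub_eq_add_neg, add_pow]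
    exact Finset.sum_congr rfl fun k _ => by ring
  simp only [substShift, ev_eq_lsum, map_finsuppSum, map_sum]
  refine Finsupp.sum_congr fun j _ => ?_
  simp only [← ev_eq_lsum, ev_single, smul_smul, ← Finset.sum_smul, binom,
    LinearMap.smul_apply, LinearMap.id_apply]

end Evaluation

section Shear

variable {A : Type*}

noncomputable def shear (θ : A → (A → ℕ →₀ ℂ)) : A × (A → ℕ →₀ ℂ) → A × (A → ℕ →₀ ℂ) :=
  fun x => (x.1, x.2 + θ x.1)

lemma shear_bijective (θ : A → (A → ℕ →₀ ℂ)) : Function.Bijective (shear θ) :=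
  Function.bijective_iff_has_inverse.mpr
    ⟨fun x => (x.1, x.2 - θ x.1), fun x => by simp [shear], fun x => by simp [shear]⟩

lemma Dd_zero : Dd (0 : A → ℕ →₀ ℂ) = 0 := by
  funext a
  simp [Dd]

lemma Dd_add (f g : A → ℕ →₀ ℂ) : Dd (f + g) = Dd f + Dd g := by
  funext a
  simp only [Dd, Pi.add_apply, Finsupp.mapDomain_add, neg_add]

lemma Bev_shear (θ : A → (A → ℕ →₀ ℂ)) (l : ℂ) (x y : A × (A → ℕ →₀ ℂ)) :
    Bev l (shear θ x) (shear θ y) = Bev l x y + 2 * betaEv θ l x.1 y.1 := by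
  simp only [Bev, shear, betaEv, Pi.add_apply, ev_add]
  ring

lemma shear_preserves_Bev_iff (θ : A → (A → ℕ →₀ ℂ)) :
    (∀ (l : ℂ) (x y : A × (A → ℕ →₀ ℂ)), Bev l (shear θ x) (shear θ y) = Bev l x y) ↔
      ∀ (l : ℂ) (a b : A), betaEv θ l a b = 0 := by
  simp only [Bev_shear, add_eq_left, mul_eq_zero, two_ne_zero, false_or]
  exact ⟨fun h l a b => h l (a, 0) (b, 0), fun h l x y => h l x.1 y.1⟩

lemma betaEv_symm (θ : A → (A → ℕ →₀ ℂ)) (l : ℂ) (a b : A) :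
    betaEv θ l a b = betaEv θ (-l) b a := by
  simp only [betaEv, neg_neg, add_comm]

end Shear

lemma ev_Lstar_apply (mul : A → A → ℕ →₀ A) (ν l : ℂ) (a : A) (g : A → ℕ →₀ ℂ) (b : A) :
    ev ν (Lstar mul l a g b) = -ev (ν - l) (g (ev l (mul a b))) := by
  rw [Lstar, ev_neg, ev_substShift]

lemma Lstar_zero (mul : A → A → ℕ →₀ A) (l : ℂ) (a : A) : Lstar mul l a 0 = 0 := by
  funext b
  simp [Lstar, substShift_zero]

lemma Lstar_add (mul : A → A → ℕ →₀ A) (l : ℂ) (a : A) (g g' : A → ℕ →₀ ℂ) :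
    Lstar mul l a (g + g') = Lstar mul l a g + Lstar mul l a g' := by
  funext b
  simp only [Lstar, Pi.add_apply, substShift_add, neg_add]

lemma IsTheta.map_zero {D : Module.End ℂ A} {θ : A → A → ℕ →₀ ℂ} (hθ : IsTheta D θ) :
    θ 0 = 0 := by
  simpa using hθ.2.1 0 0

def DiffersByCoboundary (mul : A → A → ℕ →₀ A) (ω₁ ω₂ : ℂ → A → A → (A → ℕ →₀ ℂ))
    (θ : A → (A → ℕ →₀ ℂ)) : Prop :=
  ∀ (l : ℂ) (a b : A), ω₁ l a b - ω₂ l a b = Lstar mul l a (θ b) - θ (ev l (mul a b))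

lemma pExt_shear (mul : A → A → ℕ →₀ A) (ω : ℂ → A → A → (A → ℕ →₀ ℂ))
    (θ : A → (A → ℕ →₀ ℂ)) (l : ℂ) (x y : A × (A → ℕ →₀ ℂ)) :
    pExt mul ω l (shear θ x) (shear θ y) =
      (ev l (mul x.1 y.1), ω l x.1 y.1 + Lstar mul l x.1 y.2 + Lstar mul l x.1 (θ y.1)) := by
  simp only [pExt, shear, Lstar_add, add_assoc]

theorem isExtEquiv_shear_iff (D : Module.End ℂ A) (mul : A → A → ℕ →₀ A)
    (ω₁ ω₂ : ℂ → A → A → (A → ℕ →₀ ℂ)) (θ : A → (A → ℕ →₀ ℂ)) :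
    IsExtEquiv D mul ω₁ ω₂ (shear θ) ↔ IsTheta D θ ∧ DiffersByCoboundary mul ω₁ ω₂ θ := by
  constructor
  · intro hΦ
    refine ⟨⟨fun a a' => ?_, fun r a => ?_, fun a => ?_⟩, fun l a b => ?_⟩
    · simpa [shear] using congrArg Prod.snd (hΦ.add (a, 0) (a', 0))
    · simpa [shear] using congrArg Prod.snd (hΦ.smul r (a, 0))
    · simpa [shear, DX, Dd_zero] using congrArg Prod.snd (hΦ.dcomm (a, 0))
    · have hom := congrArg Prod.snd (hΦ.hom l (a, 0) (b, 0))
      simp only [pExt, shear, Lstar_zero, add_zero, zero_add] at hom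
      rw [sub_eq_sub_iff_add_eq_add, hom, add_comm]
  · rintro ⟨⟨hadd, hsmul, hD⟩, hcob⟩
    refine ⟨fun x y => ?_, fun r x => ?_, fun x => ?_, shear_bijective θ, fun l x y => ?_,
      fun f => ?_, fun x => rfl⟩
    · simp only [shear, Prod.fst_add, Prod.snd_add, hadd, Prod.mk_add_mk, add_add_add_comm]
    · simp only [shear, Prod.smul_fst, Prod.smul_snd, hsmul, Prod.smul_mk, smul_add]
    · simp only [shear, DX, hD, Dd_add]
    · rw [pExt_shear]
      simp only [pExt, shear, Prod.mk.injEq, true_and]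
      rw [sub_eq_iff_eq_add.mp (hcob l x.1 y.1)]
      abel
    · simp [shear, IsTheta.map_zero ⟨hadd, hsmul, hD⟩]

theorem IsExtEquiv.exists_eq_shear {D : Module.End ℂ A} {mul : A → A → ℕ →₀ A}
    {ω₁ ω₂ : ℂ → A → A → (A → ℕ →₀ ℂ)} {Φ : A × (A → ℕ →₀ ℂ) → A × (A → ℕ →₀ ℂ)}
    (hΦ : IsExtEquiv D mul ω₁ ω₂ Φ) : ∃ θ, Φ = shear θ := by
  refine ⟨fun a => (Φ (a, 0)).2, funext fun x => Prod.ext (hΦ.idOnQuot x) ?_⟩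
  have split : x = (x.1, 0) + (0, x.2) := by simp
  conv_lhs => rw [split, hΦ.add, hΦ.idOnDual]
  exact add_comm _ _

lemma DiffersByCoboundary.ev_apply {mul : A → A → ℕ →₀ A}
    {ω₁ ω₂ : ℂ → A → A → (A → ℕ →₀ ℂ)} {θ : A → (A → ℕ →₀ ℂ)}
    (h : DiffersByCoboundary mul ω₁ ω₂ θ) (ν l : ℂ) (a b c : A) :
    ev ν (ω₁ l a b c) =
      ev ν (ω₂ l a b c) - ev (ν - l) (θ b (ev l (mul a c))) - ev ν (θ (ev l (mul a b)) c) := by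
  have h' := congrArg (fun g => ev ν (g c)) (h l a b)
  simp only [Pi.sub_apply, ev_sub, ev_Lstar_apply] at h'
  linear_combination h'

/-- Substituting `ω₁ = ω₂ + dθ` into the invariance identity of `ω₁` and subtracting that
of `ω₂` leaves twice the invariance identity of `β`. -/
theorem betaEv_invariant {mul : A → A → ℕ →₀ A} {ω₁ ω₂ : ℂ → A → A → (A → ℕ →₀ ℂ)}
    {θ : A → (A → ℕ →₀ ℂ)} (hi₁ : IsInvariantDual ω₁) (hi₂ : IsInvariantDual ω₂)
    (h : DiffersByCoboundary mul ω₁ ω₂ θ) (l m : ℂ) (a b c : A) :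
    betaEv θ (l + m) (ev l (mul a b)) c - betaEv θ l a (ev m (mul b c)) =
      betaEv θ (l + m) (ev m (mul b a)) c - betaEv θ m b (ev l (mul a c)) := by
  have H₁ := hi₁ l m a b c
  simp only [h.ev_apply, add_sub_cancel_left, add_sub_cancel_right,
    show -l - m = -(l + m) by ring, show -m - l = -(l + m) by ring] at H₁
  simp only [betaEv]
  linear_combination (2⁻¹ : ℂ) * hi₂ l m a b c - (2⁻¹ : ℂ) * H₁

theorem tstar_extension_equivalence_general
    (D : Module.End ℂ A) (mul : A → A → ℕ →₀ A)
    (ω₁ ω₂ : ℂ → A → A → (A → ℕ →₀ ℂ))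
    (hi₁ : IsInvariantDual ω₁) (hi₂ : IsInvariantDual ω₂) :
    ((∃ Φ, IsExtEquiv D mul ω₁ ω₂ Φ) ↔
        ∃ θ : A → (A → ℕ →₀ ℂ), IsTheta D θ ∧
          ∀ (l : ℂ) (a b : A),
            ω₁ l a b - ω₂ l a b = Lstar mul l a (θ b) - θ (ev l (mul a b))) ∧
    (∀ θ : A → (A → ℕ →₀ ℂ), IsTheta D θ →
      (∀ (l : ℂ) (a b : A),
        ω₁ l a b - ω₂ l a b = Lstar mul l a (θ b) - θ (ev l (mul a b))) →
      ((∀ (l : ℂ) (a b : A), betaEv θ l a b = betaEv θ (-l) b a) ∧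
       (∀ (l m : ℂ) (a b c : A),
         betaEv θ (l + m) (ev l (mul a b)) c - betaEv θ l a (ev m (mul b c)) =
           betaEv θ (l + m) (ev m (mul b a)) c - betaEv θ m b (ev l (mul a c))))) ∧
    ((∃ Φ, IsExtEquiv D mul ω₁ ω₂ Φ ∧
        ∀ (l : ℂ) (x y : A × (A → ℕ →₀ ℂ)), Bev l (Φ x) (Φ y) = Bev l x y) ↔
      ∃ θ : A → (A → ℕ →₀ ℂ), IsTheta D θ ∧
        (∀ (l : ℂ) (a b : A),
          ω₁ l a b - ω₂ l a b = Lstar mul l a (θ b) - θ (ev l (mul a b))) ∧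
        ∀ (l : ℂ) (a b : A), betaEv θ l a b = 0) := by
  have shear_iff := isExtEquiv_shear_iff D mul ω₁ ω₂
  refine ⟨⟨?_, ?_⟩, fun θ _ h => ⟨betaEv_symm θ, betaEv_invariant hi₁ hi₂ h⟩, ⟨?_, ?_⟩⟩
  · rintro ⟨Φ, hΦ⟩
    obtain ⟨θ, rfl⟩ := hΦ.exists_eq_shear
    exact ⟨θ, (shear_iff θ).1 hΦ⟩
  · rintro ⟨θ, hθ⟩
    exact ⟨shear θ, (shear_iff θ).2 hθ⟩
  · rintro ⟨Φ, hΦ, hB⟩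
    obtain ⟨θ, rfl⟩ := hΦ.exists_eq_shear
    obtain ⟨hθ, h⟩ := (shear_iff θ).1 hΦ
    exact ⟨θ, hθ, h, (shear_preserves_Bev_iff θ).1 hB⟩
  · rintro ⟨θ, hθ, h, hβ⟩
    exact ⟨shear θ, (shear_iff θ).2 ⟨hθ, h⟩, (shear_preserves_Bev_iff θ).2 hβ⟩

/-- Let `A` be a left-symmetric conformal algebra and
`ω¹, ω²` two invariant `2`-cocycles with values in `A^{*c}`.
(i) `T^*_{ω¹} A` and `T^*_{ω²} A` are equivalent iff there is
`θ ∈ C¹(A, A^{*c})` with `ω¹_λ(a,b) - ω²_λ(a,b) = (L^*_A(a))_λ θ(b) - θ(a_λ b)`.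
(ii) In that case `β_λ(a,b) = ½ (θ(a)_λ b + θ(b)_{-λ} a)` is a symmetric
invariant bilinear form on `A`.
(iii) The extensions are isometrically equivalent iff moreover `β = 0`. -/
theorem tstar_extension_equivalence
    (D : Module.End ℂ A) (mul : A → A → ℕ →₀ A)
    (ω₁ ω₂ : ℂ → A → A → (A → ℕ →₀ ℂ))
    (hA : IsLSC D mul)
    (hω₁ : IsC2Dual D ω₁) (hω₂ : IsC2Dual D ω₂)
    (hc₁ : IsCocycleDual D mul ω₁) (hc₂ : IsCocycleDual D mul ω₂)
    (hi₁ : IsInvariantDual ω₁) (hi₂ : IsInvariantDual ω₂) :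
    ((∃ Φ, IsExtEquiv D mul ω₁ ω₂ Φ) ↔
        ∃ θ : A → (A → ℕ →₀ ℂ), IsTheta D θ ∧
          ∀ (l : ℂ) (a b : A),
            ω₁ l a b - ω₂ l a b = Lstar mul l a (θ b) - θ (ev l (mul a b))) ∧
    (∀ θ : A → (A → ℕ →₀ ℂ), IsTheta D θ →
      (∀ (l : ℂ) (a b : A),
        ω₁ l a b - ω₂ l a b = Lstar mul l a (θ b) - θ (ev l (mul a b))) →
      ((∀ (l : ℂ) (a b : A), betaEv θ l a b = betaEv θ (-l) b a) ∧
       (∀ (l m : ℂ) (a b c : A),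
         betaEv θ (l + m) (ev l (mul a b)) c - betaEv θ l a (ev m (mul b c)) =
           betaEv θ (l + m) (ev m (mul b a)) c - betaEv θ m b (ev l (mul a c))))) ∧
    ((∃ Φ, IsExtEquiv D mul ω₁ ω₂ Φ ∧
        ∀ (l : ℂ) (x y : A × (A → ℕ →₀ ℂ)), Bev l (Φ x) (Φ y) = Bev l x y) ↔
      ∃ θ : A → (A → ℕ →₀ ℂ), IsTheta D θ ∧
        (∀ (l : ℂ) (a b : A),
          ω₁ l a b - ω₂ l a b = Lstar mul l a (θ b) - θ (ev l (mul a b))) ∧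
        ∀ (l : ℂ) (a b : A), betaEv θ l a b = 0) :=
  tstar_extension_equivalence_general D mul ω₁ ω₂ hi₁ hi₂

end LSCpaper
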